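/- Membership of the classic benchmarks in the SEQOPT classes. Let n ≥ 2. Then: (i) OneMax ∈ SEQOPT_0 (the class with k = 0 and no parameters d); (ii) Trap = Jump_n ∈ SEQOPT_1(1); (iii) for every integer d with 2 ≤ d ≤ n − 1, Cliff_d ∈ SEQOPT_2(d, d − 1); and (iv) for every integer m with 2 ≤ m ≤ n − 1, Jump_m ∈ SEQOPT_2(m, 1). -/

import Mathlib

open MeasureTheory
open scoped ENNReal NNReal

namespace MMAHHStmt

/-- The two acceptance operators. -/
inductive Op : Type
  | OI : Op
  | OW : Op
  deriving DecidableEq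

instance : MeasurableSpace Op := ⊤

/-- Search points: bit-strings of length `n`. -/
abbrev Point (n : ℕ) := Fin n → Bool

/-- The number of one-bits of a bit-string. -/
def ones {n : ℕ} (x : Point n) : ℕ := (Finset.univ.filter fun i => x i = true).card

/-- The all-ones string, the global optimum of all benchmarks considered. -/
def optimum (n : ℕ) : Point n := fun _ => true

/-- Flipping the bit in position `v`. -/
def flipBit {n : ℕ} (x : Point n) (v : Fin n) : Point n := Function.update x v (!(x v))

open Classical in
/-- The search point obtained from `x` by proposing to flip bit `v` and applying the
acceptance operator `op` for the objective function `f`. -/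
noncomputable def movedPoint {n : ℕ} (f : Point n → ℝ) (op : Op) (x : Point n) (v : Fin n) :
    Point n :=
  match op with
  | Op.OI => if f x < f (flipBit x v) then flipBit x v else x
  | Op.OW => if f (flipBit x v) < f x then flipBit x v else x

open Classical in
/-- One-step transition probability of the search point under acceptance operator `op`:
a uniformly random bit is flipped and the move is accepted or rejected according to `op`. -/
noncomputable def moveProb {n : ℕ} (f : Point n → ℝ) (op : Op) (x x' : Point n) : ℝ≥0∞ :=
  ((Finset.univ.filter fun v => movedPoint f op x v = x').card : ℝ≥0∞) / n

/-- Transition probabilities of the two-state Markov chain on the acceptance operators. -/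
noncomputable def switchProb (p q : ℝ) : Op → Op → ℝ≥0∞
  | Op.OI, Op.OI => ENNReal.ofReal (1 - p)
  | Op.OI, Op.OW => ENNReal.ofReal p
  | Op.OW, Op.OI => ENNReal.ofReal q
  | Op.OW, Op.OW => ENNReal.ofReal (1 - q)

/-- One-step transition probabilities of the MMAHH on the state space
`Point n × Op`: the search point moves according to the current acceptance operator, and,
independently, the operator switches according to the two-state Markov chain. -/
noncomputable def mmahhTrans {n : ℕ} (f : Point n → ℝ) (p q : ℝ) :
    Point n × Op → Point n × Op → ℝ≥0∞ :=
  fun s s' => moveProb f s.2 s.1 s'.1 * switchProb p q s.2 s'.2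

/-- `X` is (a version of) the MMAHH Markov chain with objective function `f` and switching
probabilities `p` and `q`, under the measure `μ`: each `X t` is measurable, and conditionally
on any history, the next state is distributed according to `mmahhTrans`. -/
def IsMMAHH {n : ℕ} {Ω : Type*} [MeasurableSpace Ω] (μ : Measure Ω)
    (X : ℕ → Ω → Point n × Op) (f : Point n → ℝ) (p q : ℝ) : Prop :=
  (∀ t, Measurable (X t)) ∧
  ∀ (t : ℕ) (σ : ℕ → Point n × Op) (s' : Point n × Op),
    μ {ω | (∀ i ≤ t, X i ω = σ i) ∧ X (t + 1) ω = s'}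
      = μ {ω | ∀ i ≤ t, X i ω = σ i} * mmahhTrans f p q (σ t) s'

/-- The runtime: the first hitting time of the global optimum, as an extended natural number
(`⊤` if the optimum is never reached). -/
noncomputable def hitTime {n : ℕ} {Ω : Type*} (X : ℕ → Ω → Point n × Op) (ω : Ω) : ℕ∞ :=
  ⨅ t ∈ {t : ℕ | (X t ω).1 = optimum n}, (t : ℕ∞)

/-- The `k`-th switching time between the two acceptance operators (with junk value given by
`Nat.sInf ∅ = 0` on the probability-zero event that no further switch occurs). -/
noncomputable def switchTime {n : ℕ} {Ω : Type*} (X : ℕ → Ω → Point n × Op) : ℕ → Ω → ℕ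
  | 0, _ => 0
  | k + 1, ω =>
      sInf {t : ℕ | switchTime X k ω ≤ t ∧ (X t ω).2 ≠ (X (switchTime X k ω) ω).2}

/-- The OneMax benchmark. -/
noncomputable def OneMax (n : ℕ) (x : Point n) : ℝ := (ones x : ℝ)

/-- The Jump benchmark with gap parameter `m`. -/
noncomputable def Jump (n m : ℕ) (x : Point n) : ℝ :=
  if ones x ≤ n - m ∨ ones x = n then (m : ℝ) + (ones x : ℝ) else (n : ℝ) - (ones x : ℝ)

/-- The Cliff benchmark with difficulty parameter `d`. -/
noncomputable def Cliff (n d : ℕ) (x : Point n) : ℝ :=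
  if ones x ≤ n - d then (ones x : ℝ) else (ones x : ℝ) - (d : ℝ) + 1 / 2

/-- `f : {0,1}^n → ℝ` belongs to the class `SEQOPT_k(d 1, …, d k)`, where `d 0 = n` and
`d (k+1) = 0`: the all-ones string is the unique global maximum, and between consecutive
layers the function is alternatingly increasing and decreasing, with sign changes exactly at
the layers `d 1 > ⋯ > d k`. -/
def SeqOpt (n k : ℕ) (d : ℕ → ℕ) (f : Point n → ℝ) : Prop :=
  d 0 = n ∧ d (k + 1) = 0 ∧ (∀ i, i ≤ k → d (i + 1) < d i) ∧
  (∀ x : Point n, x ≠ optimum n → f x < f (optimum n)) ∧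
  (∀ l, l ≤ k → ∀ h : ℕ, d (l + 1) ≤ h → h < d l →
    ((k - l) % 2 = 0 →
      ∀ x y : Point n, n - ones x = h → n - ones y = h + 1 → f x > f y) ∧
    ((k - l) % 2 = 1 →
      ∀ x y : Point n, n - ones x = h → n - ones y = h + 1 → f x < f y))

/-! All four benchmarks depend on `x` only through `ones x`, so membership in a SEQOPT class
reduces to the direction of each step `j → j + 1` of a profile `g : ℕ → ℝ` on `[0..n]`: the step
from `j` to `j + 1` ones is the step between the layers `L (n - j)` and `L (n - (j + 1))`. -/

lemma ones_le {n : ℕ} (x : Point n) : ones x ≤ n := by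
  simpa [ones] using Finset.card_filter_le Finset.univ fun i => x i = true

lemma ones_optimum (n : ℕ) : ones (optimum n) = n := by
  simp [ones, optimum]

lemma ones_lt_of_ne_optimum {n : ℕ} {x : Point n} (hx : x ≠ optimum n) : ones x < n := by
  refine (ones_le x).lt_of_ne fun h => hx (funext fun i => ?_)
  have hfilter : Finset.univ.filter (fun i => x i = true) = Finset.univ :=
    Finset.eq_univ_of_card _ (by simpa [ones] using h)
  exact Finset.filter_eq_self.mp hfilter i (Finset.mem_univ i)

theorem SeqOpt.of_profile {n k : ℕ} {d : ℕ → ℕ} (g : ℕ → ℝ)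
    (hd0 : d 0 = n) (hdk : d (k + 1) = 0) (hd : ∀ i, i ≤ k → d (i + 1) < d i)
    (hmax : ∀ j < n, g j < g n)
    (hstep : ∀ l ≤ k, ∀ j < n, d (l + 1) ≤ n - (j + 1) → n - (j + 1) < d l →
      ((k - l) % 2 = 0 → g j < g (j + 1)) ∧ ((k - l) % 2 = 1 → g (j + 1) < g j)) :
    SeqOpt n k d (fun x => g (ones x)) := by
  refine ⟨hd0, hdk, hd, fun x hx => ?_, fun l hl h hlow hhigh => ?_⟩
  · simpa only [ones_optimum] using hmax _ (ones_lt_of_ne_optimum hx)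
  have hlayers : ∀ x y : Point n, n - ones x = h → n - ones y = h + 1 →
      ones x = ones y + 1 ∧ ((k - l) % 2 = 0 → g (ones y) < g (ones y + 1)) ∧
        ((k - l) % 2 = 1 → g (ones y + 1) < g (ones y)) := by
    intro x y hx hy
    have := ones_le x
    have := ones_le y
    exact ⟨by omega, hstep l hl (ones y) (by omega) (by omega) (by omega)⟩
  refine ⟨fun hpar x y hx hy => ?_, fun hpar x y hx hy => ?_⟩
  · obtain ⟨hxy, hinc, -⟩ := hlayers x y hx hy
    simpa only [hxy] using hinc hpar
  · obtain ⟨hxy, -, hdec⟩ := hlayers x y hx hy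
    simpa only [hxy] using hdec hpar

section Profiles

variable {n : ℕ}

/-- `Jump n m = fun x => jumpProfile n m (ones x)` holds by `rfl`. -/
noncomputable def jumpProfile (n m j : ℕ) : ℝ :=
  if j ≤ n - m ∨ j = n then (m : ℝ) + j else (n : ℝ) - j

/-- `Cliff n d = fun x => cliffProfile n d (ones x)` holds by `rfl`. -/
noncomputable def cliffProfile (n d j : ℕ) : ℝ :=
  if j ≤ n - d then (j : ℝ) else (j : ℝ) - d + 1 / 2

lemma jumpProfile_lt_succ {m j : ℕ} (hj : j + 1 ≤ n - m) :
    jumpProfile n m j < jumpProfile n m (j + 1) := by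
  rw [jumpProfile, jumpProfile, if_pos (Or.inl (by omega)), if_pos (Or.inl hj)]
  push_cast
  linarith

lemma jumpProfile_succ_lt {m j : ℕ} (hj : n - m ≤ j) (hjn : j + 1 < n) :
    jumpProfile n m (j + 1) < jumpProfile n m j := by
  rw [jumpProfile, jumpProfile, if_neg (by omega)]
  split_ifs with hlow
  · have : (n : ℝ) ≤ m + j := by exact_mod_cast (by omega : n ≤ m + j)
    push_cast
    linarith
  · push_cast
    linarith

lemma jumpProfile_lt_top {m j : ℕ} (hm : 0 < m) (hj : j < n) :
    jumpProfile n m j < jumpProfile n m n := by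
  have hm' : (0 : ℝ) < m := by exact_mod_cast hm
  have hj' : (j : ℝ) < n := by exact_mod_cast hj
  rw [jumpProfile, jumpProfile, if_pos (Or.inr rfl)]
  split_ifs <;> linarith [(j.cast_nonneg : (0 : ℝ) ≤ j)]

lemma cliffProfile_lt_succ_of_le {d j : ℕ} (hj : j + 1 ≤ n - d) :
    cliffProfile n d j < cliffProfile n d (j + 1) := by
  rw [cliffProfile, cliffProfile, if_pos (by omega), if_pos hj]
  push_cast
  linarith

lemma cliffProfile_lt_succ_of_lt {d j : ℕ} (hj : n - d < j) :
    cliffProfile n d j < cliffProfile n d (j + 1) := by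
  rw [cliffProfile, cliffProfile, if_neg (by omega), if_neg (by omega)]
  push_cast
  linarith

lemma cliffProfile_succ_lt {d : ℕ} (hd : 2 ≤ d) :
    cliffProfile n d (n - d + 1) < cliffProfile n d (n - d) := by
  have hd' : (2 : ℝ) ≤ d := by exact_mod_cast hd
  rw [cliffProfile, cliffProfile, if_neg (by omega), if_pos le_rfl]
  push_cast
  linarith

lemma cliffProfile_lt_top {d j : ℕ} (hd : 0 < d) (hdn : d ≤ n) (hj : j < n) :
    cliffProfile n d j < cliffProfile n d n := by
  have hj' : (j : ℝ) < n := by exact_mod_cast hj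
  rw [cliffProfile, cliffProfile, if_neg (show ¬n ≤ n - d by omega)]
  split_ifs with hlow
  · have : (j : ℝ) + d ≤ n := by exact_mod_cast (by omega : j + d ≤ n)
    linarith
  · linarith

end Profiles

theorem oneMax_mem_seqOpt {n : ℕ} (hn : 0 < n) :
    SeqOpt n 0 (fun i => if i = 0 then n else 0) (OneMax n) := by
  refine SeqOpt.of_profile Nat.cast (by simp) (by simp) (by simpa using hn)
    (fun j hj => by exact_mod_cast hj) fun l hl j _ _ _ => ?_
  obtain rfl : l = 0 := by omega
  exact ⟨fun _ => by exact_mod_cast j.lt_succ_self, by simp⟩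

theorem trap_mem_seqOpt {n : ℕ} (hn : 2 ≤ n) :
    SeqOpt n 1 (fun i => if i = 0 then n else if i = 1 then 1 else 0) (Jump n n) := by
  refine SeqOpt.of_profile (jumpProfile n n) (by simp) (by simp)
    (fun i hi => by interval_cases i <;> simp; omega)
    (fun j hj => jumpProfile_lt_top (by omega) hj) fun l hl j hj hlow hhigh => ?_
  interval_cases l <;> norm_num at hlow hhigh ⊢
  · exact jumpProfile_succ_lt (by omega) (by omega)
  · rw [show j + 1 = n by omega]
    exact jumpProfile_lt_top (by omega) hj

theorem cliff_mem_seqOpt {n d : ℕ} (hd : 2 ≤ d) (hdn : d < n) :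
    SeqOpt n 2 (fun i => if i = 0 then n else if i = 1 then d else if i = 2 then d - 1 else 0)
      (Cliff n d) := by
  refine SeqOpt.of_profile (cliffProfile n d) (by simp) (by simp)
    (fun i hi => by interval_cases i <;> simp <;> omega)
    (fun j hj => cliffProfile_lt_top (by omega) hdn.le hj) fun l hl j hj hlow hhigh => ?_
  interval_cases l <;> norm_num at hlow hhigh ⊢
  · exact cliffProfile_lt_succ_of_le (by omega)
  · obtain rfl : j = n - d := by omega
    exact cliffProfile_succ_lt hd
  · exact cliffProfile_lt_succ_of_lt (by omega)

theorem jump_mem_seqOpt {n m : ℕ} (hm : 2 ≤ m) (hmn : m < n) :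
    SeqOpt n 2 (fun i => if i = 0 then n else if i = 1 then m else if i = 2 then 1 else 0)
      (Jump n m) := by
  refine SeqOpt.of_profile (jumpProfile n m) (by simp) (by simp)
    (fun i hi => by interval_cases i <;> simp <;> omega)
    (fun j hj => jumpProfile_lt_top (by omega) hj) fun l hl j hj hlow hhigh => ?_
  interval_cases l <;> norm_num at hlow hhigh ⊢
  · exact jumpProfile_lt_succ (by omega)
  · exact jumpProfile_succ_lt (by omega) (by omega)
  · rw [show j + 1 = n by omega]
    exact jumpProfile_lt_top (by omega) hj

/-- Membership of the classic benchmarks in the SEQOPT classes: `OneMax ∈ SEQOPT_0`,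
`Trap = Jump_n ∈ SEQOPT_1(1)`, `Cliff_d ∈ SEQOPT_2(d, d-1)` and `Jump_m ∈ SEQOPT_2(m, 1)`. -/
theorem benchmarks_in_seqopt (n : ℕ) (hn : 2 ≤ n) :
    SeqOpt n 0 (fun i => if i = 0 then n else 0) (OneMax n) ∧
    SeqOpt n 1 (fun i => if i = 0 then n else if i = 1 then 1 else 0) (Jump n n) ∧
    (∀ d : ℕ, 2 ≤ d → d ≤ n - 1 →
      SeqOpt n 2
        (fun i => if i = 0 then n else if i = 1 then d else if i = 2 then d - 1 else 0)
        (Cliff n d)) ∧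
    (∀ m : ℕ, 2 ≤ m → m ≤ n - 1 →
      SeqOpt n 2
        (fun i => if i = 0 then n else if i = 1 then m else if i = 2 then 1 else 0)
        (Jump n m)) :=
  ⟨oneMax_mem_seqOpt (by omega), trap_mem_seqOpt hn,
    fun _ hd hdn => cliff_mem_seqOpt hd (by omega),
    fun _ hm hmn => jump_mem_seqOpt hm (by omega)⟩
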